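/- Define B(γ, α, β) := (2γ − α − β)·(2γ(γ − α − β) + αβ) / (24αβ) for real α, β, γ with α, β ≠ 0. Then for every real number p ≠ 0, B(1, 2, p) + B(1+p, 2, p) − (1/p)·B(1, 1, 1) = 0. -/
import Mathlib

/-- The value `ζ_{B2}(-1, γ | α, β)` of the two-dimensional Barnes zeta function at `s = -1`,
expressed through the generalized Bernoulli polynomial:
`B(γ, α, β) = (2γ - α - β)(2γ(γ - α - β) + αβ)/(24αβ)`. -/
noncomputable def barnesAtNegOne (γ α β : ℝ) : ℝ :=
  (2 * γ - α - β) * (2 * γ * (γ - α - β) + α * β) / (24 * α * β)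

theorem barnes_residue_cancellation (p : ℝ) (hp : p ≠ 0) :
    barnesAtNegOne 1 2 p + barnesAtNegOne (1 + p) 2 p -
      (1 / p) * barnesAtNegOne 1 1 1 = 0 := by
  unfold barnesAtNegOne
  field_simp
  ring
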